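/- arXiv:2204.14131 — 5 statements merged into one kernel-verified Lean document; each statement's English description precedes it below -/
import Mathlib

section
/- Let Ω be a finite probability space with probability measure P, and let a, b, d ⊆ Ω be events with a ⊆ b, b ⊆ d, P(b) > 0 and P(d) > 0. Let x = P(a|b), y = P(b|d), and let X_{(a|b)∧(b|d)} = 1_{a∩b∩d} + x·1_{bᶜ∩b∩d} + y·1_{a∩b∩dᶜ} + z·1_{bᶜ∩dᶜ} with z = [P(a∩b∩d) + x·P(bᶜ∩b∩d) + y·P(a∩b∩dᶜ)]/P(b∪d) (the conjunction random quantity of (a|b) and (b|d)). Then X_{(a|b)∧(b|d)} = X_{(a|d)} pointwise, where X_{(a|d)} = 1_{a∩d} + P(a|d)·1_{dᶜ}. In particular z = P(a|d) = P(a|b)·P(b|d) (compound probability theorem). -/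
open Finset Set

attribute [local instance] Classical.propDecidable

/-- indicator function of a set, real-valued -/
noncomputable def indi {Ω : Type*} (S : Set Ω) : Ω → ℝ := S.indicator 1

/-- probability of a set under weight function p -/
noncomputable def prS {Ω : Type*} [Fintype Ω] (p : Ω → ℝ) (S : Set Ω) : ℝ :=
  ∑ w, S.indicator p w

/-- expectation of a random quantity under weight function p -/
noncomputable def expec {Ω : Type*} [Fintype Ω] (p : Ω → ℝ) (X : Ω → ℝ) : ℝ :=
  ∑ w, p w * X w

/-- conditional probability P(a|b) = P(a ∩ b)/P(b) -/
noncomputable def cprob {Ω : Type*} [Fintype Ω] (p : Ω → ℝ) (a b : Set Ω) : ℝ :=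
  prS p (a ∩ b) / prS p b

/-- conditional random quantity X_{(a|b)} = 1_{a∩b} + P(a|b)·1_{bᶜ} -/
noncomputable def condRQ {Ω : Type*} [Fintype Ω] (p : Ω → ℝ) (a b : Set Ω) (w : Ω) : ℝ :=
  indi (a ∩ b) w + cprob p a b * indi bᶜ w

/-- McGee/Kaufmann prevision of the conjunction (a|b) ∧ (c|d) -/
noncomputable def conjZ {Ω : Type*} [Fintype Ω] (p : Ω → ℝ) (a b c d : Set Ω) : ℝ :=
  (prS p (a ∩ b ∩ c ∩ d) + cprob p a b * prS p (bᶜ ∩ c ∩ d)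
    + cprob p c d * prS p (a ∩ b ∩ dᶜ)) / prS p (b ∪ d)

/-- conjunction random quantity X_{(a|b) ∧ (c|d)} -/
noncomputable def conjRQ {Ω : Type*} [Fintype Ω] (p : Ω → ℝ) (a b c d : Set Ω) (w : Ω) : ℝ :=
  if w ∈ a ∩ b ∩ c ∩ d then 1
  else if w ∈ (aᶜ ∩ b) ∪ (cᶜ ∩ d) then 0
  else if w ∈ bᶜ ∩ c ∩ d then cprob p a b
  else if w ∈ a ∩ b ∩ dᶜ then cprob p c d
  else conjZ p a b c d

/-- disjunction random quantity X_{(a|b) ∨ (c|d)} -/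
noncomputable def disjRQ {Ω : Type*} [Fintype Ω] (p : Ω → ℝ) (a b c d : Set Ω) (w : Ω) : ℝ :=
  if w ∈ (a ∩ b) ∪ (c ∩ d) then 1
  else if w ∈ aᶜ ∩ b ∩ cᶜ ∩ d then 0
  else if w ∈ bᶜ ∩ cᶜ ∩ d then cprob p a b
  else if w ∈ aᶜ ∩ b ∩ dᶜ then cprob p c d
  else cprob p a b + cprob p c d - conjZ p a b c d

theorem stmt5 {Ω : Type*} [Fintype Ω] (p : Ω → ℝ) (hp : ∀ w, 0 ≤ p w) (hp1 : ∑ w, p w = 1)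
    (a b d : Set Ω) (hab : a ⊆ b) (hbd : b ⊆ d) (hb : 0 < prS p b) (hd : 0 < prS p d) :
    (∀ w, indi (a ∩ b ∩ d) w + cprob p a b * indi (bᶜ ∩ b ∩ d) w
        + cprob p b d * indi (a ∩ b ∩ dᶜ) w + conjZ p a b b d * indi (bᶜ ∩ dᶜ) w
        = condRQ p a d w) ∧
    conjZ p a b b d = cprob p a d ∧
    cprob p a d = cprob p a b * cprob p b d := by
  have hbne : prS p b ≠ 0 := ne_of_gt hb
  have hdne : prS p d ≠ 0 := ne_of_gt hd
  have had : a ⊆ d := hab.trans hbd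
  have h1 : a ∩ b = a := Set.inter_eq_self_of_subset_left hab
  have h2 : a ∩ d = a := Set.inter_eq_self_of_subset_left had
  have h3 : b ∩ d = b := Set.inter_eq_self_of_subset_left hbd
  have h4 : bᶜ ∩ b = (∅ : Set Ω) := compl_inter_self b
  have h5 : a ∩ dᶜ = (∅ : Set Ω) := by
    ext w; simp only [Set.mem_inter_iff, Set.mem_compl_iff, Set.mem_empty_iff_false, iff_false,
      not_and, not_not]
    exact fun hw => had hw
  have h6 : b ∪ d = d := Set.union_eq_self_of_subset_left hbd
  have h7 : bᶜ ∩ dᶜ = dᶜ :=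
    Set.inter_eq_self_of_subset_right (Set.compl_subset_compl.mpr hbd)
  have hempty : prS p (∅ : Set Ω) = 0 := by simp [prS]
  have hiempty : ∀ w : Ω, indi (∅ : Set Ω) w = 0 := by intro w; simp [indi]
  have hz : conjZ p a b b d = cprob p a d := by
    simp [conjZ, cprob, h1, h2, h3, h4, h5, h6, hempty, Set.empty_inter]
  have hcomp : cprob p a d = cprob p a b * cprob p b d := by
    simp only [cprob, h1, h2, h3]
    field_simp
  refine ⟨?_, hz, hcomp⟩
  intro w
  simp only [condRQ, h1, h2, h3, h4, h5, h6, h7, hz, Set.empty_inter, hiempty,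
    mul_zero, add_zero]
end

section
/- Let Ω be a finite probability space with probability measure P, and let a, b, c ⊆ Ω be events with P(b) > 0. Then the conjunction random quantity of (a|b) and (c|b), defined as in the McGee/Kaufmann formula, coincides pointwise with the conditional random quantity X_{(a∩c|b)} = 1_{a∩c∩b} + P(a∩c|b)·1_{bᶜ}. In particular, the prevision of the conjunction (a|b)∧(c|b) equals P(a∩c|b). -/
open Finset Set

attribute [local instance] Classical.propDecidable

theorem stmt6 {Ω : Type*} [Fintype Ω] (p : Ω → ℝ) (hp : ∀ w, 0 ≤ p w) (hp1 : ∑ w, p w = 1)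
    (a b c : Set Ω) (hb : 0 < prS p b) :
    (∀ w, conjRQ p a b c b w = condRQ p (a ∩ c) b w) ∧
      conjZ p a b c b = cprob p (a ∩ c) b := by
  have h1 : a ∩ b ∩ c ∩ b = a ∩ c ∩ b := by ext w; simp; try tauto
  have h2 : bᶜ ∩ c ∩ b = (∅ : Set Ω) := by ext w; simp; try tauto
  have h3 : a ∩ b ∩ bᶜ = (∅ : Set Ω) := by ext w; simp; try tauto
  have h5 : prS p (∅ : Set Ω) = 0 := by simp [prS]
  have hZ : conjZ p a b c b = cprob p (a ∩ c) b := by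
    unfold conjZ cprob
    rw [h1, h2, h3, Set.union_self, h5, mul_zero, mul_zero, add_zero, add_zero]
  refine ⟨?_, hZ⟩
  intro w
  unfold conjRQ condRQ indi
  rw [hZ]
  by_cases hwb : w ∈ b
  · by_cases hwa : w ∈ a <;> by_cases hwc : w ∈ c <;>
      simp [Set.indicator_apply, hwb, hwa, hwc]
  · simp [Set.indicator_apply, hwb]
end

section
/- Let Ω be a finite probability space with probability measure P, and let a, b ⊆ Ω with P(b) > 0. The conjunction random quantity of (a|b) with its negation ¬(a|b) is identically zero: X_{(a|b)∧¬(a|b)} = 0 pointwise on Ω. -/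
open Finset Set

attribute [local instance] Classical.propDecidable

theorem stmt8 {Ω : Type*} [Fintype Ω] (p : Ω → ℝ) (hp : ∀ w, 0 ≤ p w) (hp1 : ∑ w, p w = 1)
    (a b : Set Ω) (hb : 0 < prS p b) :
    ∀ w, conjRQ p a b aᶜ b w = 0 := by
  intro w
  have he1 : a ∩ b ∩ aᶜ ∩ b = (∅ : Set Ω) := by
    ext x; simp only [Set.mem_inter_iff, Set.mem_compl_iff, Set.mem_empty_iff_false, iff_false]; tauto
  have he2 : bᶜ ∩ aᶜ ∩ b = (∅ : Set Ω) := by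
    ext x; simp only [Set.mem_inter_iff, Set.mem_compl_iff, Set.mem_empty_iff_false, iff_false]; tauto
  have he3 : a ∩ b ∩ bᶜ = (∅ : Set Ω) := by
    ext x; simp only [Set.mem_inter_iff, Set.mem_compl_iff, Set.mem_empty_iff_false, iff_false]; tauto
  have hemp : prS p (∅ : Set Ω) = 0 := by simp [prS]
  have hz : conjZ p a b aᶜ b = 0 := by
    unfold conjZ
    rw [he1, he2, he3, hemp]
    simp
  unfold conjRQ
  simp only [he1, he2, he3, hz]
  split_ifs <;> simp_all
end

section
/- Let Ω be a finite probability space with probability measure P, let a, b, c ⊆ Ω with a ⊆ b, P(b) > 0 and P(b ∪ c) > 0. Then the conjunction random quantity of (a|b) and (a|b∪c) coincides with the conditional random quantity of (a|b∪c): X_{(a|b)∧(a|b∪c)} = X_{(a|b∪c)} pointwise on Ω. In particular P(a|b∪c) ≤ P(a|b) whenever these are both defined. -/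
open Finset Set

attribute [local instance] Classical.propDecidable

theorem stmt11 {Ω : Type*} [Fintype Ω] (p : Ω → ℝ) (hp : ∀ w, 0 ≤ p w) (hp1 : ∑ w, p w = 1)
    (a b c : Set Ω) (hab : a ⊆ b) (hb : 0 < prS p b) (hbc : 0 < prS p (b ∪ c)) :
    (∀ w, conjRQ p a b a (b ∪ c) w = condRQ p a (b ∪ c) w) ∧
      cprob p a (b ∪ c) ≤ cprob p a b := by
  have haB : a ∩ b = a := Set.inter_eq_self_of_subset_left hab
  have habc : a ⊆ b ∪ c := hab.trans Set.subset_union_left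
  have haBC : a ∩ (b ∪ c) = a := Set.inter_eq_self_of_subset_left habc
  have prmono : ∀ S T : Set Ω, S ⊆ T → prS p S ≤ prS p T := fun S T h =>
    Finset.sum_le_sum fun w _ => Set.indicator_le_indicator_of_subset h hp w
  have prnn : ∀ S : Set Ω, 0 ≤ prS p S := fun S =>
    Finset.sum_nonneg fun w _ => Set.indicator_nonneg (fun w _ => hp w) w
  have hz : conjZ p a b a (b ∪ c) = cprob p a (b ∪ c) := by
    have e1 : a ∩ b ∩ a ∩ (b ∪ c) = a := by
      rw [haB, Set.inter_self, haBC]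
    have e2 : bᶜ ∩ a ∩ (b ∪ c) = ∅ := by
      ext w; simp only [Set.mem_inter_iff, Set.mem_compl_iff, Set.mem_empty_iff_false, iff_false]
      rintro ⟨⟨hw1, hw2⟩, _⟩; exact hw1 (hab hw2)
    have e3 : a ∩ b ∩ (b ∪ c)ᶜ = ∅ := by
      ext w; simp only [Set.mem_inter_iff, Set.mem_compl_iff, Set.mem_empty_iff_false, iff_false,
        Set.mem_union]
      rintro ⟨⟨_, hw2⟩, hw3⟩; exact hw3 (Or.inl hw2)
    have e4 : b ∪ (b ∪ c) = b ∪ c := by rw [← Set.union_assoc, Set.union_self]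
    have epr : prS p ∅ = 0 := by simp [prS]
    rw [conjZ, e1, e2, e3, e4, epr]; simp only [cprob, haBC]
    ring
  refine ⟨fun w => ?_, ?_⟩
  · by_cases hwa : w ∈ a
    · have hwb : w ∈ b := hab hwa
      simp [conjRQ, condRQ, indi, Set.indicator, hwa, hwb]
    · by_cases hwb : w ∈ b
      · simp [conjRQ, condRQ, indi, Set.indicator, hwa, hwb]
      · by_cases hwc : w ∈ c
        · simp [conjRQ, condRQ, indi, Set.indicator, hwa, hwb, hwc]
        · simp [conjRQ, condRQ, indi, Set.indicator, hwa, hwb, hwc, hz]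
  · rw [cprob, cprob, haB, haBC]
    exact div_le_div_of_nonneg_left (prnn a) hb (prmono _ _ Set.subset_union_left)
end

section
/- Let Ω be a finite probability space with probability measure P, and let a, b, c, d ⊆ Ω with P(b) > 0, P(d) > 0, P(b∪d) > 0. Denote by z∧ the prevision of the conjunction (a|b)∧(c|d) given by the McGee/Kaufmann formula. Then De Morgan's law holds for previsions: the prevision of the disjunction (aᶜ|b)∨(cᶜ|d) equals 1 − z∧, where the prevision of a disjunction (e|f)∨(g|h) is defined as P(e|f) + P(g|h) − z∧((e|f),(g|h)) with z∧ the conjunction prevision. -/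
open Finset Set

attribute [local instance] Classical.propDecidable

set_option maxHeartbeats 2000000 in
theorem stmt17 {Ω : Type*} [Fintype Ω] (p : Ω → ℝ) (hp : ∀ w, 0 ≤ p w) (hp1 : ∑ w, p w = 1)
    (a b c d : Set Ω) (hb : 0 < prS p b) (hd : 0 < prS p d) (hbd : 0 < prS p (b ∪ d)) :
    cprob p aᶜ b + cprob p cᶜ d - conjZ p aᶜ b cᶜ d = 1 - conjZ p a b c d := by
  classical
  set e1 := prS p (a ∩ b ∩ c ∩ d) with he1
  set e2 := prS p (a ∩ b ∩ cᶜ ∩ d) with he2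
  set e3 := prS p (a ∩ b ∩ dᶜ) with he3
  set e4 := prS p (aᶜ ∩ b ∩ c ∩ d) with he4
  set e5 := prS p (aᶜ ∩ b ∩ cᶜ ∩ d) with he5
  set e6 := prS p (aᶜ ∩ b ∩ dᶜ) with he6
  set e7 := prS p (bᶜ ∩ c ∩ d) with he7
  set e8 := prS p (bᶜ ∩ cᶜ ∩ d) with he8
  have hB : prS p (b) = e1 + e2 + e3 + e4 + e5 + e6 := by
    simp only [he1, he2, he3, he4, he5, he6, he7, he8, prS, ← Finset.sum_add_distrib]
    refine Finset.sum_congr rfl fun w _ => ?_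
    simp only [Set.indicator_apply, Set.mem_inter_iff, Set.mem_compl_iff, Set.mem_union]
    by_cases ha : w ∈ a <;> by_cases hb' : w ∈ b <;> by_cases hc : w ∈ c <;>
      by_cases hd' : w ∈ d <;> simp [ha, hb', hc, hd']
  have hD : prS p (d) = e1 + e2 + e4 + e5 + e7 + e8 := by
    simp only [he1, he2, he3, he4, he5, he6, he7, he8, prS, ← Finset.sum_add_distrib]
    refine Finset.sum_congr rfl fun w _ => ?_
    simp only [Set.indicator_apply, Set.mem_inter_iff, Set.mem_compl_iff, Set.mem_union]
    by_cases ha : w ∈ a <;> by_cases hb' : w ∈ b <;> by_cases hc : w ∈ c <;>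
      by_cases hd' : w ∈ d <;> simp [ha, hb', hc, hd']
  have hU : prS p (b ∪ d) = e1 + e2 + e3 + e4 + e5 + e6 + e7 + e8 := by
    simp only [he1, he2, he3, he4, he5, he6, he7, he8, prS, ← Finset.sum_add_distrib]
    refine Finset.sum_congr rfl fun w _ => ?_
    simp only [Set.indicator_apply, Set.mem_inter_iff, Set.mem_compl_iff, Set.mem_union]
    by_cases ha : w ∈ a <;> by_cases hb' : w ∈ b <;> by_cases hc : w ∈ c <;>
      by_cases hd' : w ∈ d <;> simp [ha, hb', hc, hd']
  have hAB : prS p (a ∩ b) = e1 + e2 + e3 := by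
    simp only [he1, he2, he3, he4, he5, he6, he7, he8, prS, ← Finset.sum_add_distrib]
    refine Finset.sum_congr rfl fun w _ => ?_
    simp only [Set.indicator_apply, Set.mem_inter_iff, Set.mem_compl_iff, Set.mem_union]
    by_cases ha : w ∈ a <;> by_cases hb' : w ∈ b <;> by_cases hc : w ∈ c <;>
      by_cases hd' : w ∈ d <;> simp [ha, hb', hc, hd']
  have hCD : prS p (c ∩ d) = e1 + e4 + e7 := by
    simp only [he1, he2, he3, he4, he5, he6, he7, he8, prS, ← Finset.sum_add_distrib]
    refine Finset.sum_congr rfl fun w _ => ?_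
    simp only [Set.indicator_apply, Set.mem_inter_iff, Set.mem_compl_iff, Set.mem_union]
    by_cases ha : w ∈ a <;> by_cases hb' : w ∈ b <;> by_cases hc : w ∈ c <;>
      by_cases hd' : w ∈ d <;> simp [ha, hb', hc, hd']
  have hnAB : prS p (aᶜ ∩ b) = e4 + e5 + e6 := by
    simp only [he1, he2, he3, he4, he5, he6, he7, he8, prS, ← Finset.sum_add_distrib]
    refine Finset.sum_congr rfl fun w _ => ?_
    simp only [Set.indicator_apply, Set.mem_inter_iff, Set.mem_compl_iff, Set.mem_union]
    by_cases ha : w ∈ a <;> by_cases hb' : w ∈ b <;> by_cases hc : w ∈ c <;>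
      by_cases hd' : w ∈ d <;> simp [ha, hb', hc, hd']
  have hnCD : prS p (cᶜ ∩ d) = e2 + e5 + e8 := by
    simp only [he1, he2, he3, he4, he5, he6, he7, he8, prS, ← Finset.sum_add_distrib]
    refine Finset.sum_congr rfl fun w _ => ?_
    simp only [Set.indicator_apply, Set.mem_inter_iff, Set.mem_compl_iff, Set.mem_union]
    by_cases ha : w ∈ a <;> by_cases hb' : w ∈ b <;> by_cases hc : w ∈ c <;>
      by_cases hd' : w ∈ d <;> simp [ha, hb', hc, hd']
  have hBne : prS p b ≠ 0 := ne_of_gt hb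
  have hDne : prS p d ≠ 0 := ne_of_gt hd
  have hUne : prS p (b ∪ d) ≠ 0 := ne_of_gt hbd
  have hBne' : e1 + e2 + e3 + e4 + e5 + e6 ≠ 0 := hB ▸ hBne
  have hDne' : e1 + e2 + e4 + e5 + e7 + e8 ≠ 0 := hD ▸ hDne
  have hUne' : e1 + e2 + e3 + e4 + e5 + e6 + e7 + e8 ≠ 0 := hU ▸ hUne
  have hx : cprob p a b * (e1 + e2 + e3 + e4 + e5 + e6) = e1 + e2 + e3 := by
    rw [← hB, cprob, div_mul_cancel₀ _ hBne, hAB]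
  have hy : cprob p c d * (e1 + e2 + e4 + e5 + e7 + e8) = e1 + e4 + e7 := by
    rw [← hD, cprob, div_mul_cancel₀ _ hDne, hCD]
  have hnx : cprob p aᶜ b = 1 - cprob p a b := by
    rw [cprob, cprob, hnAB, hAB, hB]
    field_simp
    ring
  have hny : cprob p cᶜ d = 1 - cprob p c d := by
    rw [cprob, cprob, hnCD, hCD, hD]
    field_simp
    ring
  have hZ : conjZ p aᶜ b cᶜ d
      = (1 - cprob p a b - cprob p c d) + conjZ p a b c d := by
    rw [conjZ, conjZ, ← he5, ← he8, ← he6, ← he1, ← he7, ← he3, hnx, hny, hU]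
    have key : e5 + (1 - cprob p a b) * e8 + (1 - cprob p c d) * e6
        = (1 - cprob p a b - cprob p c d) * (e1 + e2 + e3 + e4 + e5 + e6 + e7 + e8)
          + (e1 + cprob p a b * e7 + cprob p c d * e3) := by
      linear_combination hx + hy
    rw [key, add_div, mul_div_assoc, div_self hUne', mul_one]
  rw [hnx, hny, hZ]
  ring
end
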